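/- Let D be a finite family of unit disks in the plane, let ψ ≥ 1 be a real number, and let p be chosen uniformly at random from [0,ψ]². Let D' ⊆ D be the (random) subfamily of disks of D that are entirely contained in a single cell of the shifted grid with shift p and side length ψ. Then the expected matching number of the intersection graph of D' satisfies E[k_opt(I(D'))] ≥ (1 − 8/ψ)·k_opt(I(D)). -/

import Mathlib

open MeasureTheory ENNReal

/-- The Euclidean plane `ℝ²`. -/
abbrev Plane := EuclideanSpace ℝ (Fin 2)

/-- The `(i,j)`-th cell of the grid of side length `ψ` shifted by `p`:
the half-open square `p + (iψ, jψ) + [0,ψ)²`. -/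
def gridCell (p : Plane) (ψ : ℝ) (i j : ℤ) : Set Plane :=
  {x | (p 0 + i * ψ ≤ x 0 ∧ x 0 < p 0 + i * ψ + ψ) ∧
       (p 1 + j * ψ ≤ x 1 ∧ x 1 < p 1 + j * ψ + ψ)}

/-- A matching in the intersection graph of the family of unit disks with centers
in `S`: a finite set of unordered pairs of distinct intersecting unit disks of the
family, no two pairs sharing a disk. -/
def IsUnitDiskMatching (S : Set Plane) (M : Finset (Sym2 Plane)) : Prop :=
  (∀ e ∈ M, ∃ c c' : Plane, e = s(c, c') ∧ c ∈ S ∧ c' ∈ S ∧ c ≠ c' ∧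
      (Metric.closedBall c 1 ∩ Metric.closedBall c' 1).Nonempty) ∧
    ∀ e ∈ M, ∀ f ∈ M, e ≠ f → ∀ v : Plane, v ∈ e → v ∉ f

/-- The matching number of the intersection graph of the family of unit disks
with centers in `S`. -/
noncomputable def unitDiskMatchingNumber (S : Set Plane) : ℕ :=
  sSup {n | ∃ M : Finset (Sym2 Plane), IsUnitDiskMatching S M ∧ M.card = n}

def good1 (ψ t s : ℝ) : Prop := ∃ i : ℤ, s + i * ψ ≤ t - 1 ∧ t + 1 < s + i * ψ + ψ

noncomputable def badSet (ψ t : ℝ) : Set ℝ :=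
  Set.Icc (max (t - 1 - ⌊(t + 1) / ψ⌋ * ψ) 0) (t + 1 - ⌊(t + 1) / ψ⌋ * ψ) ∪
  Set.Icc (t - 1 - ⌊(t + 1) / ψ⌋ * ψ + ψ) ψ

lemma badSet_measurable (ψ t : ℝ) : MeasurableSet (badSet ψ t) :=
  measurableSet_Icc.union measurableSet_Icc

lemma volume_badSet_le (ψ t : ℝ) (hψ0 : 0 < ψ) : volume (badSet ψ t) ≤ ENNReal.ofReal 2 := by
  have h2 : (⌊(t + 1) / ψ⌋ : ℝ) * ψ ≤ t + 1 := by
    rw [← le_div_iff₀ hψ0]; exact Int.floor_le _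
  refine (measure_union_le _ _).trans ?_
  rw [Real.volume_Icc, Real.volume_Icc]
  rcases le_or_gt 0 (t - 1 - ⌊(t + 1) / ψ⌋ * ψ) with h | h
  · rw [max_eq_left h]
    have hz : ENNReal.ofReal (ψ - (t - 1 - ⌊(t + 1) / ψ⌋ * ψ + ψ)) = 0 :=
      ENNReal.ofReal_eq_zero.mpr (by linarith)
    rw [hz, add_zero]
    exact ENNReal.ofReal_le_ofReal (by linarith)
  · rw [max_eq_right h.le, ← ENNReal.ofReal_add (by linarith) (by linarith)]
    exact ENNReal.ofReal_le_ofReal (by linarith)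

lemma mem_badSet_of_not_good1 {ψ t s : ℝ} (hψ0 : 0 < ψ) (hs0 : 0 ≤ s) (hsψ : s ≤ ψ)
    (h : ¬ good1 ψ t s) : s ∈ badSet ψ t := by
  have hle : (⌊(t + 1 - s) / ψ⌋ : ℝ) * ψ ≤ t + 1 - s := by
    rw [← le_div_iff₀ hψ0]; exact Int.floor_le _
  have hgt : (t + 1 - s) / ψ < (⌊(t + 1 - s) / ψ⌋ : ℝ) + 1 := by
    exact_mod_cast Int.lt_floor_add_one ((t + 1 - s) / ψ)
  have hgt' : t + 1 - s < ((⌊(t + 1 - s) / ψ⌋ : ℝ) + 1) * ψ := by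
    rwa [div_lt_iff₀ hψ0] at hgt
  have hbad : t - 1 < s + (⌊(t + 1 - s) / ψ⌋ : ℝ) * ψ := by
    by_contra hc
    push_neg at hc
    exact h ⟨_, by linarith, by linarith⟩
  have hi_le : ⌊(t + 1 - s) / ψ⌋ ≤ ⌊(t + 1) / ψ⌋ := by
    apply Int.floor_mono
    gcongr
    · linarith
  have hi_ge : ⌊(t + 1) / ψ⌋ - 1 ≤ ⌊(t + 1 - s) / ψ⌋ := by
    have h1 : s / ψ ≤ 1 := (div_le_one hψ0).mpr hsψ
    have hmono : (t + 1) / ψ - 1 ≤ (t + 1 - s) / ψ := by rw [sub_div]; linarith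
    have h3 := Int.floor_mono hmono
    rwa [show (t + 1) / ψ - 1 = (t + 1) / ψ - (1 : ℤ) by push_cast; ring,
      Int.floor_sub_intCast] at h3
  rcases (by omega : ⌊(t + 1 - s) / ψ⌋ = ⌊(t + 1) / ψ⌋ ∨
      ⌊(t + 1 - s) / ψ⌋ = ⌊(t + 1) / ψ⌋ - 1) with heq | heq
  · have hcast : ((⌊(t + 1 - s) / ψ⌋ : ℤ) : ℝ) = (⌊(t + 1) / ψ⌋ : ℝ) := by
      exact_mod_cast congrArg (fun n : ℤ => (n : ℝ)) heq
    rw [hcast] at hle hbad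
    left
    exact ⟨max_le (by linarith) hs0, by linarith⟩
  · have hcast : ((⌊(t + 1 - s) / ψ⌋ : ℤ) : ℝ) = (⌊(t + 1) / ψ⌋ : ℝ) - 1 := by
      rw [heq]; push_cast; ring
    rw [hcast] at hbad
    right
    exact ⟨by nlinarith, hsψ⟩

def goodPt (ψ : ℝ) (c p : Plane) : Prop := good1 ψ (c 0) (p 0) ∧ good1 ψ (c 1) (p 1)

lemma coord_abs_le {x c : Plane} (hx : x ∈ Metric.closedBall c 1) (k : Fin 2) :
    |x k - c k| ≤ 1 := by
  have hd : dist x c ≤ 1 := Metric.mem_closedBall.mp hx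
  have h1 : |x k - c k| = Real.sqrt ((x k - c k) ^ 2) := (Real.sqrt_sq_eq_abs _).symm
  rw [h1]
  refine le_trans ?_ hd
  rw [EuclideanSpace.dist_eq]
  apply Real.sqrt_le_sqrt
  have := Finset.single_le_sum (f := fun i => dist (x i) (c i) ^ 2)
    (fun i _ => sq_nonneg _) (Finset.mem_univ k)
  simpa [Real.dist_eq, sq_abs] using this

lemma fits_of_goodPt {ψ : ℝ} {c p : Plane} (h : goodPt ψ c p) :
    ∃ i j : ℤ, Metric.closedBall c 1 ⊆ gridCell p ψ i j := by
  obtain ⟨⟨i, hi1, hi2⟩, ⟨j, hj1, hj2⟩⟩ := h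
  refine ⟨i, j, fun x hx => ?_⟩
  have h0 := abs_le.mp (coord_abs_le hx 0)
  have h1 := abs_le.mp (coord_abs_le hx 1)
  exact ⟨⟨by linarith [h0.1], by linarith [h0.2]⟩, ⟨by linarith [h1.1], by linarith [h1.2]⟩⟩

lemma good1_measurable (ψ t : ℝ) (k : Fin 2) :
    MeasurableSet {p : Plane | good1 ψ t (p k)} := by
  have hset : {s : ℝ | good1 ψ t s} = ⋃ i : ℤ, Set.Ioc (t + 1 - ψ - i * ψ) (t - 1 - i * ψ) := by
    ext s
    simp only [Set.mem_setOf_eq, good1, Set.mem_iUnion, Set.mem_Ioc]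
    exact exists_congr fun i => ⟨fun ⟨h1, h2⟩ => ⟨by linarith, by linarith⟩,
      fun ⟨h1, h2⟩ => ⟨by linarith, by linarith⟩⟩
  have : {p : Plane | good1 ψ t (p k)} = (fun p : Plane => p k) ⁻¹' {s : ℝ | good1 ψ t s} := rfl
  rw [this, hset]
  exact ((measurable_pi_apply k).comp (MeasurableEquiv.toLp 2 (Fin 2 → ℝ)).symm.measurable) (MeasurableSet.iUnion fun i => measurableSet_Ioc)

lemma volume_coordSet (A B : Set ℝ) (hA : MeasurableSet A) (hB : MeasurableSet B) :
    volume {p : Plane | p 0 ∈ A ∧ p 1 ∈ B} = volume A * volume B := by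
  have hpre : {p : Plane | p 0 ∈ A ∧ p 1 ∈ B}
      = (MeasurableEquiv.toLp 2 (Fin 2 → ℝ)).symm ⁻¹' {f : Fin 2 → ℝ | f 0 ∈ A ∧ f 1 ∈ B} := rfl
  have hT : MeasurableSet {f : Fin 2 → ℝ | f 0 ∈ A ∧ f 1 ∈ B} :=
    ((measurable_pi_apply 0) hA).inter ((measurable_pi_apply 1) hB)
  rw [hpre, (EuclideanSpace.volume_preserving_symm_measurableEquiv_toLp (Fin 2)).measure_preimage
    hT.nullMeasurableSet]
  have h2 : {f : Fin 2 → ℝ | f 0 ∈ A ∧ f 1 ∈ B} = Set.univ.pi ![A, B] := by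
    ext f; simp [Fin.forall_fin_two]
  rw [h2, volume_pi_pi]
  simp [Fin.prod_univ_two]

lemma matching_card_le (D : Finset Plane) (S : Set Plane) (hS : S ⊆ ↑D)
    (M : Finset (Sym2 Plane)) (hM : IsUnitDiskMatching S M) :
    M.card ≤ (D ×ˢ D).card := by
  classical
  refine le_trans (Finset.card_le_card (t := (D ×ˢ D).image fun x : Plane × Plane => s(x.1, x.2))
    ?_) Finset.card_image_le
  intro e he
  obtain ⟨c, c', he', hc, hc', _, _⟩ := hM.1 e he
  exact Finset.mem_image.2 ⟨(c, c'), Finset.mem_product.2 ⟨hS hc, hS hc'⟩, he'.symm⟩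

lemma bddAbove_matchingNumbers (D : Finset Plane) (S : Set Plane) (hS : S ⊆ ↑D) :
    BddAbove {n | ∃ M : Finset (Sym2 Plane), IsUnitDiskMatching S M ∧ M.card = n} :=
  ⟨(D ×ˢ D).card, fun _ ⟨M, hM, hc⟩ => hc ▸ matching_card_le D S hS M hM⟩

lemma empty_matching (S : Set Plane) : IsUnitDiskMatching S ∅ :=
  ⟨fun e he => absurd he (Finset.notMem_empty e),
   fun e he => absurd he (Finset.notMem_empty e)⟩

lemma card_le_matchingNumber (D : Finset Plane) (S : Set Plane) (hS : S ⊆ ↑D)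
    (M : Finset (Sym2 Plane)) (hM : IsUnitDiskMatching S M) :
    M.card ≤ unitDiskMatchingNumber S :=
  le_csSup (bddAbove_matchingNumbers D S hS) ⟨M, hM, rfl⟩

lemma exists_max_matching (D : Finset Plane) :
    ∃ M : Finset (Sym2 Plane), IsUnitDiskMatching (↑D) M ∧
      M.card = unitDiskMatchingNumber ↑D :=
 by
  have h0 : (0 : ℕ) ∈ {n | ∃ M : Finset (Sym2 Plane),
      IsUnitDiskMatching (↑D : Set Plane) M ∧ M.card = n} :=
    ⟨∅, empty_matching _, Finset.card_empty⟩
  exact Nat.sSup_mem ⟨0, h0⟩ (bddAbove_matchingNumbers D ↑D subset_rfl)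

lemma forall_mem_pair_set (ψ : ℝ) (c c' : Plane) :
    {p : Plane | ∀ v ∈ s(c, c'), goodPt ψ v p} =
      {p : Plane | goodPt ψ c p ∧ goodPt ψ c' p} := by
  ext p
  simp [Sym2.mem_iff, or_imp, forall_and]

lemma pair_set_measurable (ψ : ℝ) (c c' : Plane) :
    MeasurableSet {p : Plane | goodPt ψ c p ∧ goodPt ψ c' p} := by
  have h : {p : Plane | goodPt ψ c p ∧ goodPt ψ c' p} =
      ({p : Plane | good1 ψ (c 0) (p 0)} ∩ {p : Plane | good1 ψ (c 1) (p 1)}) ∩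
      ({p : Plane | good1 ψ (c' 0) (p 0)} ∩ {p : Plane | good1 ψ (c' 1) (p 1)}) := rfl
  rw [h]
  exact ((good1_measurable ψ (c 0) 0).inter (good1_measurable ψ (c 1) 1)).inter
    ((good1_measurable ψ (c' 0) 0).inter (good1_measurable ψ (c' 1) 1))

lemma edge_vol {ψ : ℝ} (hψ0 : 0 < ψ) (c c' : Plane) :
    ENNReal.ofReal (ψ * ψ - 8 * ψ) ≤
      volume ({p : Plane | goodPt ψ c p ∧ goodPt ψ c' p} ∩
        {p : Plane | p 0 ∈ Set.Icc (0:ℝ) ψ ∧ p 1 ∈ Set.Icc (0:ℝ) ψ}) := by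
  set Q : Set Plane := {p | p 0 ∈ Set.Icc (0:ℝ) ψ ∧ p 1 ∈ Set.Icc (0:ℝ) ψ} with hQdef
  set G : Set Plane := {p | goodPt ψ c p ∧ goodPt ψ c' p} with hGdef
  have hQvol : volume Q = ENNReal.ofReal ψ * ENNReal.ofReal ψ := by
    rw [hQdef, volume_coordSet _ _ measurableSet_Icc measurableSet_Icc, Real.volume_Icc, sub_zero]
  have hstrip0 : ∀ t : ℝ, volume {p : Plane | p 0 ∈ badSet ψ t ∧ p 1 ∈ Set.Icc (0:ℝ) ψ}
      ≤ ENNReal.ofReal (2 * ψ) := by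
    intro t
    rw [volume_coordSet _ _ (badSet_measurable ψ t) measurableSet_Icc, Real.volume_Icc, sub_zero]
    calc volume (badSet ψ t) * ENNReal.ofReal ψ ≤ ENNReal.ofReal 2 * ENNReal.ofReal ψ :=
        mul_le_mul_left (volume_badSet_le ψ t hψ0) _
      _ = ENNReal.ofReal (2 * ψ) := (ENNReal.ofReal_mul (by norm_num)).symm
  have hstrip1 : ∀ t : ℝ, volume {p : Plane | p 0 ∈ Set.Icc (0:ℝ) ψ ∧ p 1 ∈ badSet ψ t}
      ≤ ENNReal.ofReal (2 * ψ) := by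
    intro t
    rw [volume_coordSet _ _ measurableSet_Icc (badSet_measurable ψ t), Real.volume_Icc, sub_zero]
    calc ENNReal.ofReal ψ * volume (badSet ψ t) ≤ ENNReal.ofReal ψ * ENNReal.ofReal 2 :=
        mul_le_mul_right (volume_badSet_le ψ t hψ0) _
      _ = ENNReal.ofReal (2 * ψ) := by
        rw [← ENNReal.ofReal_mul hψ0.le, mul_comm]
  have hsub : Q \ G ⊆
      {p : Plane | p 0 ∈ badSet ψ (c 0) ∧ p 1 ∈ Set.Icc (0:ℝ) ψ} ∪
      {p : Plane | p 0 ∈ Set.Icc (0:ℝ) ψ ∧ p 1 ∈ badSet ψ (c 1)} ∪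
      {p : Plane | p 0 ∈ badSet ψ (c' 0) ∧ p 1 ∈ Set.Icc (0:ℝ) ψ} ∪
      {p : Plane | p 0 ∈ Set.Icc (0:ℝ) ψ ∧ p 1 ∈ badSet ψ (c' 1)} := by
    rintro p ⟨hpQ, hpG⟩
    obtain ⟨hp0, hp1⟩ := hpQ
    rw [hGdef, Set.mem_setOf_eq, not_and_or] at hpG
    rcases hpG with hg | hg <;> rw [goodPt, not_and_or] at hg
    · rcases hg with hg | hg
      · exact Or.inl <| Or.inl <| Or.inl ⟨mem_badSet_of_not_good1 hψ0 hp0.1 hp0.2 hg, hp1⟩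
      · exact Or.inl <| Or.inl <| Or.inr ⟨hp0, mem_badSet_of_not_good1 hψ0 hp1.1 hp1.2 hg⟩
    · rcases hg with hg | hg
      · exact Or.inl <| Or.inr ⟨mem_badSet_of_not_good1 hψ0 hp0.1 hp0.2 hg, hp1⟩
      · exact Or.inr ⟨hp0, mem_badSet_of_not_good1 hψ0 hp1.1 hp1.2 hg⟩
  have hdiff : volume (Q \ G) ≤ ENNReal.ofReal (8 * ψ) := by
    refine (measure_mono hsub).trans ?_
    refine le_trans (measure_union_le _ _) ?_
    refine le_trans (add_le_add (le_trans (measure_union_le _ _)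
      (add_le_add (le_trans (measure_union_le _ _)
        (add_le_add (hstrip0 _) (hstrip1 _))) (hstrip0 _))) (hstrip1 _)) ?_
    rw [← ENNReal.ofReal_add (by positivity) (by positivity),
        ← ENNReal.ofReal_add (by positivity) (by positivity),
        ← ENNReal.ofReal_add (by positivity) (by positivity)]
    exact ENNReal.ofReal_le_ofReal (by linarith)
  rw [ENNReal.ofReal_sub _ (by positivity), tsub_le_iff_right]
  calc ENNReal.ofReal (ψ * ψ) = volume Q := by
        rw [hQvol, ← ENNReal.ofReal_mul hψ0.le]
    _ ≤ volume (G ∩ Q) + volume (Q \ G) := by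
        refine le_trans (measure_mono (fun p hp => ?_)) (measure_union_le _ _)
        by_cases hg : p ∈ G
        · exact Or.inl ⟨hg, hp⟩
        · exact Or.inr ⟨hp, hg⟩
    _ ≤ volume (G ∩ Q) + ENNReal.ofReal (8 * ψ) := add_le_add_right hdiff _

lemma ofReal_nat_mul_le (k : ℕ) (x : ℝ) :
    ENNReal.ofReal ((k : ℝ) * x) ≤ (k : ℝ≥0∞) * ENNReal.ofReal x := by
  rcases le_or_gt 0 x with hx | hx
  · rw [ENNReal.ofReal_mul (by positivity), ENNReal.ofReal_natCast]
  · rw [ENNReal.ofReal_eq_zero.mpr (by nlinarith [Nat.cast_nonneg (α := ℝ) k])]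
    exact zero_le

/-- Shifting a grid of side `ψ ≥ 1` by a uniformly random point `p ∈ [0,ψ]²` and
keeping only the disks of `D` entirely contained in a single grid cell, the
expected matching number of the surviving intersection graph is at least
`(1 - 8/ψ)` times the matching number of the intersection graph of `D`. -/
theorem random_shift_expected_matching (D : Finset Plane) (ψ : ℝ) (hψ : 1 ≤ ψ) :
    ENNReal.ofReal ((1 - 8 / ψ) * (unitDiskMatchingNumber ↑D : ℝ) * ψ ^ 2) ≤
      ∫⁻ p in {p : Plane | p 0 ∈ Set.Icc (0 : ℝ) ψ ∧ p 1 ∈ Set.Icc (0 : ℝ) ψ},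
        (unitDiskMatchingNumber
          {c : Plane | c ∈ D ∧ ∃ i j : ℤ, Metric.closedBall c 1 ⊆ gridCell p ψ i j}
          : ENNReal) := by
  classical
  have hψ0 : 0 < ψ := lt_of_lt_of_le one_pos hψ
  set Q : Set Plane := {p | p 0 ∈ Set.Icc (0:ℝ) ψ ∧ p 1 ∈ Set.Icc (0:ℝ) ψ} with hQdef
  obtain ⟨M, hM, hMcard⟩ := exists_max_matching D
  set G : Sym2 Plane → Set Plane := fun e => {p | ∀ v ∈ e, goodPt ψ v p} with hGdef
  have hGpair : ∀ e ∈ M, ∃ c c' : Plane,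
      G e = {p : Plane | goodPt ψ c p ∧ goodPt ψ c' p} := by
    intro e he
    obtain ⟨c, c', he', -⟩ := hM.1 e he
    exact ⟨c, c', by rw [hGdef]; simp only; rw [he', forall_mem_pair_set]⟩
  have hGmeas : ∀ e ∈ M, MeasurableSet (G e) := by
    intro e he
    obtain ⟨c, c', hcc⟩ := hGpair e he
    rw [hcc]
    exact pair_set_measurable ψ c c'
  have key : ∀ p : Plane,
      (M.filter fun e => ∀ v ∈ e, goodPt ψ v p).card ≤
        unitDiskMatchingNumber
          {c : Plane | c ∈ D ∧ ∃ i j : ℤ, Metric.closedBall c 1 ⊆ gridCell p ψ i j} := by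
    intro p
    refine card_le_matchingNumber D _ (fun c hc => Finset.mem_coe.2 hc.1) _ ⟨?_, ?_⟩
    · intro e he
      rw [Finset.mem_filter] at he
      obtain ⟨c, c', he', hc, hc', hne, hint⟩ := hM.1 e he.1
      refine ⟨c, c', he', ⟨Finset.mem_coe.1 hc, fits_of_goodPt (he.2 c ?_)⟩,
        ⟨Finset.mem_coe.1 hc', fits_of_goodPt (he.2 c' ?_)⟩, hne, hint⟩
      · rw [he']; exact Sym2.mem_mk_left c c'
      · rw [he']; exact Sym2.mem_mk_right c c'
    · intro e he f hf
      exact hM.2 e (Finset.mem_filter.1 he).1 f (Finset.mem_filter.1 hf).1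
  calc ENNReal.ofReal ((1 - 8 / ψ) * (unitDiskMatchingNumber (↑D : Set Plane) : ℝ) * ψ ^ 2)
      = ENNReal.ofReal ((unitDiskMatchingNumber (↑D : Set Plane) : ℝ) * (ψ * ψ - 8 * ψ)) := by
        congr 1; field_simp
    _ ≤ (unitDiskMatchingNumber (↑D : Set Plane) : ℝ≥0∞) * ENNReal.ofReal (ψ * ψ - 8 * ψ) :=
        ofReal_nat_mul_le _ _
    _ = ∑ _e ∈ M, ENNReal.ofReal (ψ * ψ - 8 * ψ) := by
        rw [Finset.sum_const, hMcard, nsmul_eq_mul]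
    _ ≤ ∑ e ∈ M, volume (G e ∩ Q) := by
        refine Finset.sum_le_sum fun e he => ?_
        obtain ⟨c, c', hcc⟩ := hGpair e he
        rw [hcc, hQdef]
        exact edge_vol hψ0 c c'
    _ = ∑ e ∈ M, ∫⁻ p in Q, (G e).indicator (fun _ => 1) p := by
        refine Finset.sum_congr rfl fun e he => ?_
        rw [lintegral_indicator (hGmeas e he) (fun _ => (1 : ℝ≥0∞)), setLIntegral_one,
          Measure.restrict_apply (hGmeas e he)]
    _ = ∫⁻ p in Q, ∑ e ∈ M, (G e).indicator (fun _ => 1) p :=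
        (lintegral_finset_sum M fun e he => measurable_one.indicator (hGmeas e he)).symm
    _ = ∫⁻ p in Q, ((M.filter fun e => ∀ v ∈ e, goodPt ψ v p).card : ℝ≥0∞) := by
        refine lintegral_congr fun p => ?_
        rw [Finset.card_filter]
        push_cast
        refine Finset.sum_congr rfl fun e he => ?_
        rw [Set.indicator_apply]
        by_cases hp : ∀ v ∈ e, goodPt ψ v p
        · rw [if_pos (show p ∈ G e from hp), if_pos hp]
        · rw [if_neg (show p ∉ G e from hp), if_neg hp]
    _ ≤ ∫⁻ p in Q, (unitDiskMatchingNumber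
          {c : Plane | c ∈ D ∧ ∃ i j : ℤ, Metric.closedBall c 1 ⊆ gridCell p ψ i j}
          : ℝ≥0∞) :=
        lintegral_mono fun p => Nat.cast_le.2 (key p)
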